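/- arXiv:2408.14551 — 3 statements merged into one kernel-verified Lean document; each statement's English description precedes it below -/
import Mathlib

section
/- For the Carlos gamma scale, (a,b) = (9,11), the unit x₀ = (1/602)·log₂((6/5)⁹·(5/4)¹¹·(3/2)²⁰) satisfies |1200·9·x₀ - 1200·log₂(6/5)| < 1/2, |1200·11·x₀ - 1200·log₂(5/4)| < 1/2, and |1200·20·x₀ - 1200·log₂(3/2)| < 1/2. -/
/-!
With `α = log₂(6/5)` and `β = log₂(5/4)` we have `log₂(3/2) = α + β`, and `x₀` is the
least-squares solution of `9x ≈ α`, `11x ≈ β`, `20x ≈ α + β`. Each residual of such a fit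
is an integer multiple of the comma `9β - 11α = log₂(5²⁰ / (2²⁹ · 3¹¹))`, divided by `602`.
That comma is tiny, since `5²⁰ / (2²⁹ · 3¹¹) ≈ 1.0028`, and `log x ≤ x - 1` bounds it by `1/200`;
the largest multiplier is `31`, and `1200 · 31 / (602 · 200) < 1/2`.
-/

open Real

theorem least_squares_fit_residuals {K : Type*} [Field K] {m n α β x : K}
    (hD : m ^ 2 + n ^ 2 + (m + n) ^ 2 ≠ 0)
    (hx : x = (m * α + n * β + (m + n) * (α + β)) / (m ^ 2 + n ^ 2 + (m + n) ^ 2)) :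
    m * x - α = (m + 2 * n) * (m * β - n * α) / (m ^ 2 + n ^ 2 + (m + n) ^ 2) ∧
    n * x - β = -((2 * m + n) * (m * β - n * α)) / (m ^ 2 + n ^ 2 + (m + n) ^ 2) ∧
    (m + n) * x - (α + β) = (n - m) * (m * β - n * α) / (m ^ 2 + n ^ 2 + (m + n) ^ 2) := by
  subst hx
  refine ⟨?_, ?_, ?_⟩ <;> field_simp <;> ring

theorem logb_two_three_halves :
    logb 2 (3 / 2 : ℝ) = logb 2 (6 / 5) + logb 2 (5 / 4) := by
  rw [← logb_mul (by norm_num) (by norm_num)]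
  norm_num

theorem logb_two_carlos_product :
    logb 2 (((6 : ℝ) / 5) ^ 9 * ((5 : ℝ) / 4) ^ 11 * ((3 : ℝ) / 2) ^ 20)
      = 9 * logb 2 (6 / 5) + 11 * logb 2 (5 / 4) + 20 * logb 2 (3 / 2) := by
  rw [logb_mul (by positivity) (by positivity), logb_mul (by positivity) (by positivity),
    logb_pow, logb_pow, logb_pow]
  push_cast
  ring

theorem logb_two_carlos_comma_bounds :
    0 ≤ 9 * logb 2 (5 / 4 : ℝ) - 11 * logb 2 (6 / 5) ∧
      9 * logb 2 (5 / 4 : ℝ) - 11 * logb 2 (6 / 5) < 1 / 200 := by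
  set r : ℝ := (5 / 4) ^ 9 / (6 / 5) ^ 11
  have hr : 9 * logb 2 (5 / 4 : ℝ) - 11 * logb 2 (6 / 5) = log r / log 2 := by
    rw [log_div (by positivity) (by positivity), log_pow, log_pow]
    simp only [logb]
    push_cast
    ring
  have hr₁ : 1 ≤ r := by norm_num [r]
  have hlog₂ : 0.6931471803 < log 2 := log_two_gt_d9
  rw [hr]
  refine ⟨div_nonneg (log_nonneg hr₁) (log_nonneg one_le_two), ?_⟩
  rw [div_lt_iff₀ (by linarith)]
  have hlog_r : log r ≤ r - 1 := log_le_sub_one_of_pos (by linarith)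
  norm_num [r] at hlog_r
  linarith

theorem stmt8 (x₀ : ℝ)
    (hx₀ : x₀ = (1/602 : ℝ) * logb 2 (((6:ℝ)/5)^9 * ((5:ℝ)/4)^11 * ((3:ℝ)/2)^20)) :
    |1200 * 9 * x₀ - 1200 * logb 2 (6/5)| < 1/2
    ∧ |1200 * 11 * x₀ - 1200 * logb 2 (5/4)| < 1/2
    ∧ |1200 * 20 * x₀ - 1200 * logb 2 (3/2)| < 1/2 := by
  rw [logb_two_three_halves]
  set α := logb 2 (6 / 5 : ℝ)
  set β := logb 2 (5 / 4 : ℝ)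
  have hx : x₀ = (9 * α + 11 * β + (9 + 11) * (α + β)) / (9 ^ 2 + 11 ^ 2 + (9 + 11) ^ 2) := by
    rw [hx₀, logb_two_carlos_product, logb_two_three_halves]
    ring
  obtain ⟨h₉, h₁₁, h₂₀⟩ := least_squares_fit_residuals (by norm_num) hx
  obtain ⟨hcomma₀, hcomma₁⟩ := logb_two_carlos_comma_bounds
  refine ⟨?_, ?_, ?_⟩ <;> rw [abs_lt] <;> constructor <;> linarith
end

section
/- In the (17,21)-Carlos scale with unit x₀ = (1/2174)·log₂((6/5)¹⁷·(5/4)²¹·(3/2)³⁸), 65 units exceed an octave by less than 0.6 cents: 0 < 1200·65·x₀ - 1200 < 0.6. -/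
/-!
The generator is `(6/5)^17 (5/4)^21 (3/2)^38 = 3^55 5^4 / 2^63`, so its 65th power is
`3^3575 5^260 / 2^4095`. The integer bounds `2^6269 < 3^3575 5^260 < 2^6270` place that power
strictly between `2^2174` and `2^2175`; hence `65 x₀` lies strictly between `1` and
`1 + 1/2174` octaves, and the excess is less than `1200/2174 ≈ 0.552` cents.
-/

open Real

theorem Real.natCast_lt_logb_and_logb_lt_of_pow_lt {b x : ℝ} {n : ℕ} (hb : 1 < b)
    (hlo : b ^ n < x) (hhi : x < b ^ (n + 1)) : (n : ℝ) < logb b x ∧ logb b x < n + 1 := by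
  have hx : 0 < x := (pow_pos (zero_lt_one.trans hb) n).trans hlo
  constructor
  · rwa [lt_logb_iff_rpow_lt hb hx, rpow_natCast]
  · rwa [logb_lt_iff_lt_rpow hb hx, ← Nat.cast_add_one, rpow_natCast]

theorem two_pow_6269_lt_three_pow_mul_five_pow : 2 ^ 6269 < 3 ^ 3575 * 5 ^ 260 := by
  decide +kernel

theorem three_pow_mul_five_pow_lt_two_pow_6270 : 3 ^ 3575 * 5 ^ 260 < 2 ^ 6270 := by
  decide +kernel

theorem carlos_generator_pow_65 :
    (((6:ℝ)/5)^17 * ((5:ℝ)/4)^21 * ((3:ℝ)/2)^38) ^ 65 = 3 ^ 3575 * 5 ^ 260 / 2 ^ 4095 := by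
  have hgen : ((6:ℝ)/5)^17 * ((5:ℝ)/4)^21 * ((3:ℝ)/2)^38 = 3 ^ 55 * 5 ^ 4 / 2 ^ 63 := by
    norm_num
  rw [hgen, div_pow, mul_pow, ← pow_mul, ← pow_mul, ← pow_mul]

theorem two_pow_2174_lt_carlos_generator_pow_65 :
    (2:ℝ) ^ 2174 < (((6:ℝ)/5)^17 * ((5:ℝ)/4)^21 * ((3:ℝ)/2)^38) ^ 65 := by
  rw [carlos_generator_pow_65, lt_div_iff₀ (by positivity), ← pow_add]
  simpa only [Nat.cast_pow, Nat.cast_mul, Nat.cast_ofNat] using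
    (Nat.cast_lt (α := ℝ)).mpr two_pow_6269_lt_three_pow_mul_five_pow

theorem carlos_generator_pow_65_lt_two_pow_2175 :
    (((6:ℝ)/5)^17 * ((5:ℝ)/4)^21 * ((3:ℝ)/2)^38) ^ 65 < (2:ℝ) ^ 2175 := by
  rw [carlos_generator_pow_65, div_lt_iff₀ (by positivity), ← pow_add]
  simpa only [Nat.cast_pow, Nat.cast_mul, Nat.cast_ofNat] using
    (Nat.cast_lt (α := ℝ)).mpr three_pow_mul_five_pow_lt_two_pow_6270

theorem stmt13 (x₀ : ℝ)
    (hx₀ : x₀ = (1/2174 : ℝ) * logb 2 (((6:ℝ)/5)^17 * ((5:ℝ)/4)^21 * ((3:ℝ)/2)^38)) :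
    0 < 1200 * 65 * x₀ - 1200 ∧ 1200 * 65 * x₀ - 1200 < 0.6 := by
  obtain ⟨hlo, hhi⟩ := Real.natCast_lt_logb_and_logb_lt_of_pow_lt one_lt_two
    two_pow_2174_lt_carlos_generator_pow_65 carlos_generator_pow_65_lt_two_pow_2175
  rw [logb_pow] at hlo hhi
  push_cast at hlo hhi
  subst hx₀
  constructor <;> linarith
end

section
/- For the pentatonic-optimized Carlos-type scale with (a,b) = (7,11), unit x₀ = (1/991)·log₂(5^3·9^25/512^7), each of the quantities |1200·7·x₀ - 1200·log₂(9/8)|, |1200·14·x₀ - 1200·log₂(5/4)|, |1200·11·x₀ - 1200·log₂(6/5)|, and |1200·25·x₀ - 1200·log₂(3/2)| is less than 7.25 cents. -/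
/-!
Each quantity is `1200 / 991` times an integer combination of `1`, `log₂ 3` and `log₂ 5`, so
two-sided rational bounds on `log₂ 3` and `log₂ 5` decide all four inequalities. The second one
holds with a margin of under `0.03` cents, which is why convergents as fine as `1054 / 665` of
`log₂ 3` are needed; a bound `p / q` on `log₂ y` is certified by comparing `2 ^ p` with `y ^ q`
in `ℕ`.
-/

open Real

lemma div_lt_logb_of_pow_lt {b y : ℝ} {p q : ℕ} (hb : 1 < b) (hq : 0 < q)
    (h : b ^ p < y ^ q) : (p : ℝ) / q < logb b y := by
  have := logb_lt_logb hb (by positivity) h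
  rw [logb_pow, logb_pow, logb_self_eq_one hb, mul_one] at this
  rwa [div_lt_iff₀ (by positivity), mul_comm]

lemma logb_lt_div_of_pow_lt {b y : ℝ} {p q : ℕ} (hb : 1 < b) (hq : 0 < q) (hy : 0 < y)
    (h : y ^ q < b ^ p) : logb b y < (p : ℝ) / q := by
  have := logb_lt_logb hb (by positivity) h
  rw [logb_pow, logb_pow, logb_self_eq_one hb, mul_one] at this
  rwa [lt_div_iff₀ (by positivity), mul_comm]

lemma logb_two_three_mem_Ioo : logb 2 3 ∈ Set.Ioo ((1054 : ℝ) / 665) (1539 / 971) := by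
  constructor
  · exact_mod_cast div_lt_logb_of_pow_lt (p := 1054) (q := 665) one_lt_two (by norm_num)
      (by exact_mod_cast (by decide +kernel : (2 : ℕ) ^ 1054 < 3 ^ 665))
  · exact_mod_cast logb_lt_div_of_pow_lt (p := 1539) (q := 971) one_lt_two (by norm_num)
      three_pos (by exact_mod_cast (by decide +kernel : (3 : ℕ) ^ 971 < 2 ^ 1539))

lemma logb_two_five_mem_Ioo : logb 2 5 ∈ Set.Ioo ((339 : ℝ) / 146) (1493 / 643) := by
  constructor
  · exact_mod_cast div_lt_logb_of_pow_lt (p := 339) (q := 146) one_lt_two (by norm_num)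
      (by exact_mod_cast (by decide +kernel : (2 : ℕ) ^ 339 < 5 ^ 146))
  · exact_mod_cast logb_lt_div_of_pow_lt (p := 1493) (q := 643) one_lt_two (by norm_num)
      (by norm_num) (by exact_mod_cast (by decide +kernel : (5 : ℕ) ^ 643 < 2 ^ 1493))

theorem stmt19 (x₀ : ℝ)
    (hx₀ : x₀ = (1/991 : ℝ) * logb 2 ((5:ℝ)^3 * (9:ℝ)^25 / (512:ℝ)^7)) :
    |1200 * 7 * x₀ - 1200 * logb 2 (9/8)| < 7.25
    ∧ |1200 * 14 * x₀ - 1200 * logb 2 (5/4)| < 7.25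
    ∧ |1200 * 11 * x₀ - 1200 * logb 2 (6/5)| < 7.25
    ∧ |1200 * 25 * x₀ - 1200 * logb 2 (3/2)| < 7.25 := by
  obtain ⟨h3l, h3u⟩ := logb_two_three_mem_Ioo
  obtain ⟨h5l, h5u⟩ := logb_two_five_mem_Ioo
  have hx₀' : logb 2 ((5:ℝ)^3 * (9:ℝ)^25 / (512:ℝ)^7) = 3 * logb 2 5 + 50 * logb 2 3 - 63 := by
    rw [show (9:ℝ)^25 = 3^50 by norm_num, show (512:ℝ)^7 = 2^63 by norm_num]
    simp [logb_div, logb_mul, logb_pow]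
  have h98 : logb 2 (9/8 : ℝ) = 2 * logb 2 3 - 3 := by
    rw [show (9/8 : ℝ) = 3^2 / 2^3 by norm_num]
    simp [logb_div, logb_pow]
  have h54 : logb 2 (5/4 : ℝ) = logb 2 5 - 2 := by
    rw [show (5/4 : ℝ) = 5 / 2^2 by norm_num]
    simp [logb_div, logb_pow]
  have h65 : logb 2 (6/5 : ℝ) = 1 + logb 2 3 - logb 2 5 := by
    rw [show (6/5 : ℝ) = 2 * 3 / 5 by norm_num]
    simp [logb_div, logb_mul]
  have h32 : logb 2 (3/2 : ℝ) = logb 2 3 - 1 := by simp [logb_div]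
  rw [hx₀, hx₀', h98, h54, h65, h32]
  refine ⟨?_, ?_, ?_, ?_⟩ <;> rw [abs_lt] <;> constructor <;> linarith
end
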